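/- Let W be a finite group acting orthogonally on a Euclidean space, ε: W → {±1} a homomorphism with ε(w₀) = −1 for some w₀ ∈ W, and let f: W → ℂ satisfy f(w₀w) = f(w) for all w. Let β, β', α be vectors with (β∨|β') ≠ 2 and w₀⁻¹β∨ = β∨ − (β∨|β')β'∨. If S_β := Σ_{w∈W} ε(w)(β∨|wα) f(w) and S_{β'} := Σ_{w∈W} ε(w)(β'∨|wα) f(w) satisfy S_β = S_{β'} (both equal 4A), then A = 0, i.e., Σ_{w∈W} ε(w)(β∨|wα) f(w) = 0. -/

import Mathlib

/-!
Reindexing the sum by `w ↦ w₀ w` and moving `w₀` to the other side of the inner product gives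
`S_β = ε(w₀) S_{w₀⁻¹β∨} = -(S_β - (β∨|β') S_{β'})`. With `S_β = S_{β'} = 4A` this reads
`(2 - (β∨|β')) · 4A = 0`, so `A = 0` because `(β∨|β') ≠ 2`.
-/

open RealInnerProductSpace

section AlternatingSum

variable {V W : Type*} [NormedAddCommGroup V] [InnerProductSpace ℝ V] [Fintype W] [Group W]
  (ρ : W →* (V ≃ₗᵢ[ℝ] V)) (ε f : W → ℂ)

noncomputable def alternatingSum (γ α : V) : ℂ :=
  ∑ w : W, ε w * (⟪γ, ρ w α⟫ : ℂ) * f w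

theorem alternatingSum_sub_smul (γ δ α : V) (c : ℝ) :
    alternatingSum ρ ε f (γ - c • δ) α =
      alternatingSum ρ ε f γ α - c * alternatingSum ρ ε f δ α := by
  simp only [alternatingSum, inner_sub_left, real_inner_smul_left, Finset.mul_sum,
    ← Finset.sum_sub_distrib]
  refine Finset.sum_congr rfl fun w _ => ?_
  push_cast
  ring

theorem alternatingSum_eq_mul_symm_apply (w₀ : W) (hε : ∀ w, ε (w₀ * w) = ε w₀ * ε w)
    (hf : ∀ w, f (w₀ * w) = f w) (γ α : V) :
    alternatingSum ρ ε f γ α = ε w₀ * alternatingSum ρ ε f ((ρ w₀).symm γ) α := by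
  rw [alternatingSum, ← Equiv.sum_comp (Equiv.mulLeft w₀), alternatingSum, Finset.mul_sum]
  refine Finset.sum_congr rfl fun w _ => ?_
  have hinner : ⟪γ, ρ (w₀ * w) α⟫ = ⟪(ρ w₀).symm γ, ρ w α⟫ := by
    rw [(ρ w₀).symm.inner_map_eq_flip, LinearIsometryEquiv.symm_symm, map_mul,
      LinearIsometryEquiv.coe_mul, Function.comp_apply]
  simp only [Equiv.coe_mulLeft, hε, hf, hinner]
  ring

end AlternatingSum

theorem stmt4_general {V : Type*} [NormedAddCommGroup V] [InnerProductSpace ℝ V]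
    {W : Type*} [Fintype W] [Group W]
    (ρ : W →* (V ≃ₗᵢ[ℝ] V))
    (ε : W → ℂ) (hε : ∀ u v : W, ε (u * v) = ε u * ε v)
    (w₀ : W) (hw₀ : ε w₀ = -1)
    (f : W → ℂ) (hf : ∀ w : W, f (w₀ * w) = f w)
    (βv β'v β' α : V)
    (hpair : ⟪βv, β'⟫ ≠ 2)
    (hrefl : (ρ w₀).symm βv = βv - ⟪βv, β'⟫ • β'v)
    (A : ℂ)
    (hA : ∑ w : W, ε w * (⟪βv, (ρ w) α⟫ : ℂ) * f w = 4 * A)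
    (hA' : ∑ w : W, ε w * (⟪β'v, (ρ w) α⟫ : ℂ) * f w = 4 * A) :
    A = 0 ∧ ∑ w : W, ε w * (⟪βv, (ρ w) α⟫ : ℂ) * f w = 0 := by
  have hsum := alternatingSum_eq_mul_symm_apply ρ ε f w₀ (hε w₀) hf βv α
  rw [hrefl, alternatingSum_sub_smul, hw₀] at hsum
  simp only [alternatingSum, hA, hA'] at hsum
  have hfactor : (2 - (⟪βv, β'⟫ : ℂ)) * (4 * A) = 0 := by linear_combination hsum
  have hpair' : (2 - (⟪βv, β'⟫ : ℂ)) ≠ 0 :=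
    sub_ne_zero.mpr fun h => hpair (by exact_mod_cast h.symm)
  have hA0 : A = 0 := by simpa [hpair'] using hfactor
  exact ⟨hA0, by rw [hA, hA0, mul_zero]⟩

/-- Abstraction of the vanishing argument: if ε(w₀) = −1, f(w₀w) = f(w),
w₀⁻¹β∨ = β∨ − (β∨|β')β'∨, (β∨|β') ≠ 2, and the alternating sums formed with β∨
and with β'∨ are both equal to 4A, then A = 0 and the sum vanishes. -/
theorem stmt4 {V : Type*} [NormedAddCommGroup V] [InnerProductSpace ℝ V]
    {W : Type*} [Fintype W] [Group W]
    (ρ : W →* (V ≃ₗᵢ[ℝ] V))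
    (ε : W → ℂ) (hε : ∀ u v : W, ε (u * v) = ε u * ε v)
    (hεpm : ∀ w : W, ε w = 1 ∨ ε w = -1)
    (w₀ : W) (hw₀ : ε w₀ = -1)
    (f : W → ℂ) (hf : ∀ w : W, f (w₀ * w) = f w)
    (βv β'v β' α : V)
    (hpair : ⟪βv, β'⟫ ≠ 2)
    (hrefl : (ρ w₀).symm βv = βv - ⟪βv, β'⟫ • β'v)
    (A : ℂ)
    (hA : ∑ w : W, ε w * (⟪βv, (ρ w) α⟫ : ℂ) * f w = 4 * A)
    (hA' : ∑ w : W, ε w * (⟪β'v, (ρ w) α⟫ : ℂ) * f w = 4 * A) :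
    A = 0 ∧ ∑ w : W, ε w * (⟪βv, (ρ w) α⟫ : ℂ) * f w = 0 :=
  stmt4_general ρ ε hε w₀ hw₀ f hf βv β'v β' α hpair hrefl A hA hA'
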